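/- The function g(p,q) = −3 + 3·min(1−p, 1−q) + 3p + 3q − 3pq on [0,1]² attains its maximum value 3/4 at p = q = 1/2, and the function g'(p,q) = −3 + 3·max(1−p−q, 0) + 3p + 3q − 3pq attains its minimum value −3/4 at p = q = 1/2. -/

import Mathlib

/-!
Substituting `u = 1 - p`, `v = 1 - q` turns the two functions into `3 (M(u,v) - u v)` and
`3 (W(u,v) - u v)`, where `M(u,v) = min u v` and `W(u,v) = max (u + v - 1) 0`. For `u ≤ v` in
`[0,1]`, `M(u,v) - u v = u (1 - v) ≤ u (1 - u) ≤ 1/4`, and the identity `W(u,v) = u - M(u, 1 - v)`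
gives `W(u,v) - u v = -(M(u, 1 - v) - u (1 - v)) ≥ -1/4`.
-/

theorem min_sub_mul_le_quarter {u v : ℝ} (hu : 0 ≤ u) (hv : 0 ≤ v) : min u v - u * v ≤ 1 / 4 := by
  wlog huv : u ≤ v generalizing u v
  · rw [min_comm, mul_comm]
    exact this hv hu (le_of_not_ge huv)
  rw [min_eq_left huv]
  calc u - u * v = u * (1 - v) := by ring
    _ ≤ u * (1 - u) := by gcongr
    _ ≤ 1 / 4 := by nlinarith [sq_nonneg (u - 1 / 2)]

theorem max_add_sub_one_zero_eq_sub_min (u v : ℝ) : max (u + v - 1) 0 = u - min u (1 - v) := by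
  rcases le_total u (1 - v) with h | h
  · rw [min_eq_left h, max_eq_right (by linarith), sub_self]
  · rw [min_eq_right h, max_eq_left (by linarith)]
    ring

theorem neg_quarter_le_max_add_sub_one_zero_sub_mul {u v : ℝ} (hu : 0 ≤ u) (hv : v ≤ 1) :
    -(1 / 4) ≤ max (u + v - 1) 0 - u * v := by
  have hM := min_sub_mul_le_quarter hu (sub_nonneg.2 hv)
  rw [max_add_sub_one_zero_eq_sub_min]
  linear_combination hM

theorem stmt19 (g g' : ℝ → ℝ → ℝ)
    (hg : ∀ p q : ℝ, g p q = -3 + 3 * min (1 - p) (1 - q) + 3 * p + 3 * q - 3 * p * q)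
    (hg' : ∀ p q : ℝ, g' p q = -3 + 3 * max (1 - p - q) 0 + 3 * p + 3 * q - 3 * p * q) :
    (g (1 / 2) (1 / 2) = 3 / 4
      ∧ ∀ p ∈ Set.Icc (0 : ℝ) 1, ∀ q ∈ Set.Icc (0 : ℝ) 1, g p q ≤ 3 / 4)
    ∧ (g' (1 / 2) (1 / 2) = -(3 / 4)
      ∧ ∀ p ∈ Set.Icc (0 : ℝ) 1, ∀ q ∈ Set.Icc (0 : ℝ) 1, -(3 / 4) ≤ g' p q) := by
  have hg_eq (p q : ℝ) : g p q = 3 * (min (1 - p) (1 - q) - (1 - p) * (1 - q)) := by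
    rw [hg]
    ring
  have hg'_eq (p q : ℝ) :
      g' p q = 3 * (max ((1 - p) + (1 - q) - 1) 0 - (1 - p) * (1 - q)) := by
    rw [hg', show (1 - p) + (1 - q) - 1 = 1 - p - q by ring]
    ring
  refine ⟨⟨by rw [hg]; norm_num, fun p hp q hq => ?_⟩, ⟨by rw [hg']; norm_num, fun p hp q hq => ?_⟩⟩
  · have hM := min_sub_mul_le_quarter (sub_nonneg.2 hp.2) (sub_nonneg.2 hq.2)
    rw [hg_eq]
    linarith
  · have hW := neg_quarter_le_max_add_sub_one_zero_sub_mul (sub_nonneg.2 hp.2)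
      (sub_le_self 1 hq.1)
    rw [hg'_eq]
    linarith
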